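/- Assume the pair (A,B) is reachable. Let w : ℕ → ℂ be square-summable (the coefficient sequence of a function W ∈ H₂), let Λ > 0 be a real number, and let Σ be an n×n complex matrix. Define H = ∑_{k=0}^∞ conj(w_k) Aᵏ B (the Markov interpolation data), c_k = ∑_{j=0}^{k} A^{k−j} B w_j (the power-series coefficients of G·W), and ℋ = ∑_{k=0}^∞ Aᵏ H B* (A*)ᵏ. If the covariance constraint Σ = Λ ∑_{k=0}^∞ c_k c_k* holds (with the series converging), then Σ − Λ ℋ* 𝒢⁻¹ ℋ is positive semidefinite, where 𝒢 = ∑_{k=0}^∞ Aᵏ B B* (A*)ᵏ. -/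

import Mathlib

/-!
Put `g k = Aᵏ B`, so that `𝒢 = ∑ g k (g k)*`. With `V = ∑ conj(w j) Aʲ` we have `H = V B`, and since
`V` commutes with `A`, `ℋ = V 𝒢`; the Cauchy product formula for `V 𝒢` identifies `ℋ` with the
cross Gramian `∑ g k (c k)*`. For `K = ℋ* 𝒢⁻¹` the residuals `d k = c k − K g k` then satisfy
`∑ d k (d k)* = ∑ c k (c k)* − ℋ* 𝒢⁻¹ ℋ`, a convergent sum of positive semidefinite matrices.
All series converge absolutely by Gelfand's formula: `‖Aᵏ‖ ≤ tᵏ` eventually, for any `t` strictly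
between the spectral radius of `A` and `1`.
-/

open Matrix Finset Filter
open scoped ComplexOrder NNReal ENNReal

section SpectralRadius

variable {𝓐 : Type*} [NormedRing 𝓐] [NormedAlgebra ℂ 𝓐] [CompleteSpace 𝓐]

theorem spectralRadius_lt_one_of_forall_norm_lt_one {a : 𝓐}
    (h : ∀ μ ∈ spectrum ℂ a, ‖μ‖ < 1) : spectralRadius ℂ a < 1 := by
  rcases subsingleton_or_nontrivial 𝓐 with _ | _
  · simp [spectralRadius, spectrum.of_subsingleton]
  · exact_mod_cast spectrum.spectralRadius_lt_of_forall_lt a (r := 1) fun z hz => by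
      simpa [← NNReal.coe_lt_coe] using h z hz

theorem eventually_norm_pow_le_of_spectralRadius_lt {a : 𝓐} {t : ℝ≥0}
    (h : spectralRadius ℂ a < t) : ∀ᶠ k : ℕ in atTop, ‖a ^ k‖ ≤ t ^ k := by
  have hroot := (spectrum.pow_nnnorm_pow_one_div_tendsto_nhds_spectralRadius a).eventually_lt_const h
  filter_upwards [hroot, eventually_ne_atTop 0] with k hk hk0
  rw [one_div, ENNReal.rpow_inv_lt_iff (by positivity), ENNReal.rpow_natCast] at hk
  exact_mod_cast hk.le

theorem summable_norm_pow_pow_of_forall_spectrum_norm_lt_one {a : 𝓐}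
    (h : ∀ μ ∈ spectrum ℂ a, ‖μ‖ < 1) {p : ℕ} (hp : p ≠ 0) :
    Summable fun k => ‖a ^ k‖ ^ p := by
  obtain ⟨t, hat, ht1⟩ :=
    ENNReal.lt_iff_exists_nnreal_btwn.mp (spectralRadius_lt_one_of_forall_norm_lt_one h)
  have htp : (t : ℝ) ^ p < 1 := pow_lt_one₀ t.2 (by exact_mod_cast ht1) hp
  refine Summable.of_norm_bounded_eventually_nat
    (summable_geometric_of_lt_one (by positivity) htp) ?_
  filter_upwards [eventually_norm_pow_le_of_spectralRadius_lt hat] with k hk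
  rw [norm_pow, norm_norm, ← pow_mul, mul_comm, pow_mul]
  gcongr

theorem summable_norm_smul_pow_of_forall_spectrum_norm_lt_one {a : 𝓐}
    (h : ∀ μ ∈ spectrum ℂ a, ‖μ‖ < 1) {w : ℕ → ℂ} (hw : Summable fun k => ‖w k‖ ^ 2) :
    Summable fun k => ‖w k • a ^ k‖ := by
  refine ((hw.add (summable_norm_pow_pow_of_forall_spectrum_norm_lt_one h two_ne_zero)).div_const
    2).of_nonneg_of_le (fun _ => norm_nonneg _) fun k => ?_
  rw [norm_smul, le_div_iff₀ two_pos]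
  nlinarith [two_mul_le_add_sq ‖w k‖ ‖a ^ k‖]

end SpectralRadius

section MatrixSeries

variable {ι l m n R : Type*} [Fintype m] [Semiring R] [TopologicalSpace R]
  [IsTopologicalSemiring R]

theorem HasSum.matrix_mul_left (M : Matrix l m R) {f : ι → Matrix m n R} {a : Matrix m n R}
    (hf : HasSum f a) : HasSum (fun i => M * f i) (M * a) :=
  hf.map (addMonoidHomMulLeft M) (continuous_const.matrix_mul continuous_id)

theorem HasSum.matrix_mul_right (M : Matrix m n R) {f : ι → Matrix l m R} {a : Matrix l m R}
    (hf : HasSum f a) : HasSum (fun i => f i * M) (a * M) :=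
  hf.map (addMonoidHomMulRight M) (continuous_id.matrix_mul continuous_const)

end MatrixSeries

section PosSemidef

variable {ι l m n 𝕜 : Type*} [RCLike 𝕜] [Fintype l] [Fintype m] [Fintype n]

theorem Matrix.posSemidef_of_hasSum {f : ι → Matrix n n 𝕜} {a : Matrix n n 𝕜} (hf : HasSum f a)
    (h : ∀ i, (f i).PosSemidef) : a.PosSemidef := by
  rw [posSemidef_iff_dotProduct_mulVec]
  refine ⟨hf.matrix_conjTranspose.unique (by simpa only [(h _).isHermitian.eq] using hf),
    fun x => ?_⟩
  have hq : HasSum (fun i => star x ⬝ᵥ (f i *ᵥ x)) (star x ⬝ᵥ (a *ᵥ x)) :=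
    hf.map (AddMonoidHom.mk' (fun M => star x ⬝ᵥ (M *ᵥ x))
      fun M N => by rw [add_mulVec, dotProduct_add])
      (continuous_const.dotProduct (continuous_id.matrix_mulVec continuous_const))
  exact hq.nonneg fun i => (posSemidef_iff_dotProduct_mulVec.mp (h i)).2 x

theorem Matrix.nonsing_inv_mul_mul_nonsing_inv [DecidableEq n] {α : Type*} [CommRing α]
    (M : Matrix n n α) : M⁻¹ * M * M⁻¹ = M⁻¹ := by
  by_cases h : IsUnit M.det
  · rw [nonsing_inv_mul _ h, Matrix.one_mul]
  · simp [nonsing_inv_apply_not_isUnit _ h]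

theorem HasSum.posSemidef_sub_conjTranspose_mul_inv_mul [DecidableEq l]
    {f : ι → Matrix m n 𝕜} {g : ι → Matrix l n 𝕜} {F : Matrix m m 𝕜} {G : Matrix l l 𝕜}
    {X : Matrix l m 𝕜} (hff : HasSum (fun i => f i * (f i)ᴴ) F)
    (hgg : HasSum (fun i => g i * (g i)ᴴ) G) (hgf : HasSum (fun i => g i * (f i)ᴴ) X) :
    (F - Xᴴ * G⁻¹ * X).PosSemidef := by
  set K := Xᴴ * G⁻¹
  have hG : Gᴴ = G :=
    (posSemidef_of_hasSum hgg fun i => posSemidef_self_mul_conjTranspose (g i)).isHermitian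
  have hK : Kᴴ = G⁻¹ * X := by
    rw [conjTranspose_mul, conjTranspose_nonsing_inv, hG, conjTranspose_conjTranspose]
  have hKGK : K * G * Kᴴ = Xᴴ * G⁻¹ * X := by
    simp only [hK, K, Matrix.mul_assoc]
    rw [← Matrix.mul_assoc G⁻¹ G, ← Matrix.mul_assoc (G⁻¹ * G), nonsing_inv_mul_mul_nonsing_inv]
  have hd : HasSum (fun i => (f i - K * g i) * (f i - K * g i)ᴴ)
      (F - Xᴴ * Kᴴ - K * X + K * G * Kᴴ) := by
    have hterm : ∀ i, (f i - K * g i) * (f i - K * g i)ᴴ = f i * (f i)ᴴ - (g i * (f i)ᴴ)ᴴ * Kᴴ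
        - K * (g i * (f i)ᴴ) + K * (g i * (g i)ᴴ) * Kᴴ := fun i => by
      simp only [conjTranspose_sub, conjTranspose_mul, conjTranspose_conjTranspose,
        Matrix.sub_mul, Matrix.mul_sub, Matrix.mul_assoc]
      abel
    simp_rw [hterm]
    exact ((hff.sub (hgf.matrix_conjTranspose.matrix_mul_right Kᴴ)).sub
      (hgf.matrix_mul_left K)).add ((hgg.matrix_mul_left K).matrix_mul_right Kᴴ)
  convert posSemidef_of_hasSum hd fun i => posSemidef_self_mul_conjTranspose _ using 1
  rw [hKGK, hK]
  simp only [K, Matrix.mul_assoc]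
  abel

end PosSemidef

namespace Matrix

theorem pow_mul_mul_conjTranspose_pow_mul {n p R : Type*} [Fintype n] [DecidableEq n]
    [Fintype p] [CommSemiring R] [StarRing R] (A : Matrix n n R) (B : Matrix n p R) (k : ℕ) :
    A ^ k * B * (A ^ k * B)ᴴ = A ^ k * B * Bᴴ * Aᴴ ^ k := by
  simp only [conjTranspose_mul, conjTranspose_pow, Matrix.mul_assoc]

section Frobenius

-- The Frobenius norm is submultiplicative also on rectangular matrices and invariant under `ᴴ`.
attribute [local instance] frobeniusSeminormedAddCommGroup
  frobeniusNormedAddCommGroup frobeniusNormedSpace frobeniusNormedRing frobeniusNormedAlgebra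

variable {n p : Type*} [Fintype n] [DecidableEq n] [Fintype p] {A : Matrix n n ℂ}

theorem summable_norm_pow_mul_mul_conjTranspose_pow (hA : ∀ μ ∈ spectrum ℂ A, ‖μ‖ < 1)
    (B : Matrix n p ℂ) : Summable fun k => ‖A ^ k * B * Bᴴ * Aᴴ ^ k‖ := by
  refine ((summable_norm_pow_pow_of_forall_spectrum_norm_lt_one hA two_ne_zero).mul_right
    (‖B‖ ^ 2)).of_nonneg_of_le (fun _ => norm_nonneg _) fun k => ?_
  calc ‖A ^ k * B * Bᴴ * Aᴴ ^ k‖ = ‖A ^ k * B * (A ^ k * B)ᴴ‖ := by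
        rw [pow_mul_mul_conjTranspose_pow_mul]
    _ ≤ ‖A ^ k * B‖ * ‖(A ^ k * B)ᴴ‖ := frobenius_norm_mul _ _
    _ = ‖A ^ k * B‖ ^ 2 := by rw [frobenius_norm_conjTranspose, sq]
    _ ≤ (‖A ^ k‖ * ‖B‖) ^ 2 := by gcongr; exact frobenius_norm_mul _ _
    _ = ‖A ^ k‖ ^ 2 * ‖B‖ ^ 2 := mul_pow _ _ _

theorem summable_pow_mul_mul_conjTranspose_pow (hA : ∀ μ ∈ spectrum ℂ A, ‖μ‖ < 1)
    (B : Matrix n p ℂ) : Summable fun k => A ^ k * B * Bᴴ * Aᴴ ^ k :=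
  (summable_norm_pow_mul_mul_conjTranspose_pow hA B).of_norm

theorem summable_smul_pow (hA : ∀ μ ∈ spectrum ℂ A, ‖μ‖ < 1) {w : ℕ → ℂ}
    (hw : Summable fun k => ‖w k‖ ^ 2) : Summable fun k => w k • A ^ k :=
  (summable_norm_smul_pow_of_forall_spectrum_norm_lt_one hA hw).of_norm

theorem hasSum_pow_mul_mul_conjTranspose_sum_range (hA : ∀ μ ∈ spectrum ℂ A, ‖μ‖ < 1)
    {w : ℕ → ℂ} (hw : Summable fun k => ‖w k‖ ^ 2) (B : Matrix n p ℂ) :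
    HasSum (fun k => A ^ k * B * (∑ j ∈ range (k + 1), w j • (A ^ (k - j) * B))ᴴ)
      ((∑' j, starRingEnd ℂ (w j) • A ^ j) * ∑' k, A ^ k * B * Bᴴ * Aᴴ ^ k) := by
  set v := fun j => starRingEnd ℂ (w j) • A ^ j
  set u := fun k => A ^ k * B * Bᴴ * Aᴴ ^ k
  have hv : Summable fun j => ‖v j‖ :=
    summable_norm_smul_pow_of_forall_spectrum_norm_lt_one hA (by simpa using hw)
  have hu : Summable fun k => ‖u k‖ := summable_norm_pow_mul_mul_conjTranspose_pow hA B
  have hterm : ∀ k, A ^ k * B * (∑ j ∈ range (k + 1), w j • (A ^ (k - j) * B))ᴴ =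
      ∑ j ∈ range (k + 1), v j * u (k - j) := fun k => by
    rw [conjTranspose_sum, Matrix.mul_sum]
    refine sum_congr rfl fun j hj => ?_
    rw [← Nat.add_sub_cancel' (Nat.le_of_lt_succ (mem_range.mp hj)), pow_add,
      Nat.add_sub_cancel_left]
    simp only [v, u, conjTranspose_smul, conjTranspose_mul, conjTranspose_pow, Matrix.mul_smul,
      Matrix.smul_mul, Matrix.mul_assoc, starRingEnd_apply]
  have h := (summable_norm_sum_mul_range_of_summable_norm hv hu).of_norm.hasSum
  rwa [← tsum_mul_tsum_eq_tsum_sum_range_of_summable_norm hv hu, ← funext hterm] at h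

end Frobenius

end Matrix

theorem covariance_constraint_implies_posSemidef_general
    {n : ℕ}
    (A : Matrix (Fin n) (Fin n) ℂ) (B : Matrix (Fin n) (Fin 1) ℂ)
    (hA : ∀ μ ∈ spectrum ℂ A, ‖μ‖ < 1)
    (w : ℕ → ℂ) (hw : Summable fun k => ‖w k‖ ^ 2)
    (Λ : ℝ) (hΛ : 0 < Λ)
    (S : Matrix (Fin n) (Fin n) ℂ)
    (H : Matrix (Fin n) (Fin 1) ℂ)
    (hH : H = ∑' k : ℕ, (starRingEnd ℂ) (w k) • (A ^ k * B))
    (c : ℕ → Matrix (Fin n) (Fin 1) ℂ)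
    (hc : ∀ k, c k = ∑ j ∈ Finset.range (k + 1), w j • (A ^ (k - j) * B))
    (ℋ : Matrix (Fin n) (Fin n) ℂ)
    (hℋ : ℋ = ∑' k : ℕ, A ^ k * H * Bᴴ * (Aᴴ) ^ k)
    (hsum : Summable fun k => c k * (c k)ᴴ)
    (hS : S = (Λ : ℂ) • ∑' k : ℕ, c k * (c k)ᴴ) :
    (S - (Λ : ℂ) • (ℋᴴ * (∑' k : ℕ, A ^ k * B * Bᴴ * (Aᴴ) ^ k)⁻¹ * ℋ)).PosSemidef := by
  set G := ∑' k : ℕ, A ^ k * B * Bᴴ * Aᴴ ^ k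
  set V := ∑' k, starRingEnd ℂ (w k) • A ^ k
  have hG : HasSum (fun k => A ^ k * B * (A ^ k * B)ᴴ) G := by
    simpa only [pow_mul_mul_conjTranspose_pow_mul] using
      (summable_pow_mul_mul_conjTranspose_pow hA B).hasSum
  have hHV : H = V * B := by
    rw [hH]
    simpa only [Matrix.smul_mul] using
      ((summable_smul_pow hA (by simpa using hw)).hasSum.matrix_mul_right B).tsum_eq
  have hVA : ∀ k, Commute (A ^ k) V := fun k =>
    Commute.tsum_right _ fun j => (Commute.pow_pow_self A k j).smul_right _
  have hℋV : ℋ = V * G := by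
    rw [hℋ, hHV, ← ((summable_pow_mul_mul_conjTranspose_pow hA B).hasSum.matrix_mul_left V).tsum_eq]
    refine tsum_congr fun k => ?_
    simp only [← Matrix.mul_assoc, (hVA k).eq]
  have hX : HasSum (fun k => A ^ k * B * (c k)ᴴ) ℋ := by
    simpa only [hc, hℋV] using hasSum_pow_mul_mul_conjTranspose_sum_range hA hw B
  rw [hS, ← smul_sub]
  exact (hsum.hasSum.posSemidef_sub_conjTranspose_mul_inv_mul hG hX).smul
    (by exact_mod_cast hΛ.le)

/-- With `(A,B)` reachable, if `W ∈ H₂` has coefficients `w`, the Markov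
data is `H = ∑ conj(w_k) Aᵏ B`, the coefficients of `G·W` are
`c_k = ∑_{j≤k} A^{k−j} B w_j`, and the covariance constraint `S = Λ ∑ c_k c_k*` holds,
then `S − Λ ℋ* 𝒢⁻¹ ℋ ⪰ 0`, where `ℋ = ∑ Aᵏ H B* (A*)ᵏ` and `𝒢 = ∑ Aᵏ B B* (A*)ᵏ`. -/
theorem covariance_constraint_implies_posSemidef
    {n : ℕ} (hn : 1 ≤ n)
    (A : Matrix (Fin n) (Fin n) ℂ) (B : Matrix (Fin n) (Fin 1) ℂ)
    (hA : ∀ μ ∈ spectrum ℂ A, ‖μ‖ < 1)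
    (hreach : IsUnit (Matrix.of fun (i : Fin n) (j : Fin n) => (A ^ (j : ℕ) * B) i 0))
    (w : ℕ → ℂ) (hw : Summable fun k => ‖w k‖ ^ 2)
    (Λ : ℝ) (hΛ : 0 < Λ)
    (S : Matrix (Fin n) (Fin n) ℂ)
    (H : Matrix (Fin n) (Fin 1) ℂ)
    (hH : H = ∑' k : ℕ, (starRingEnd ℂ) (w k) • (A ^ k * B))
    (c : ℕ → Matrix (Fin n) (Fin 1) ℂ)
    (hc : ∀ k, c k = ∑ j ∈ Finset.range (k + 1), w j • (A ^ (k - j) * B))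
    (ℋ : Matrix (Fin n) (Fin n) ℂ)
    (hℋ : ℋ = ∑' k : ℕ, A ^ k * H * Bᴴ * (Aᴴ) ^ k)
    (hsum : Summable fun k => c k * (c k)ᴴ)
    (hS : S = (Λ : ℂ) • ∑' k : ℕ, c k * (c k)ᴴ) :
    (S - (Λ : ℂ) • (ℋᴴ * (∑' k : ℕ, A ^ k * B * Bᴴ * (Aᴴ) ^ k)⁻¹ * ℋ)).PosSemidef :=
  covariance_constraint_implies_posSemidef_general A B hA w hw Λ hΛ S H hH c hc ℋ hℋ hsum hS
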